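/- arXiv:2007.13817 — 2 statements merged into one kernel-verified Lean document; each statement's English description precedes it below -/
import Mathlib

section
/- Let p be a prime and n ≥ 1 an integer, and set s := v_p(n) + 1, where v_p denotes the p-adic valuation. In the power series ring ℤ_p[[T]], with q := 1 + T, the ideal generated by the q-integer [pn]_q equals the ideal generated by [p^s]_q. (This identity relates the quotient W(R)/[pn]_{q^{1/p}} appearing in Theorem 1.1 to the p-power q-integers [p^{h+1}]_{q^{1/p}} appearing in Theorem 1.3.) -/
open Polynomial

/-- The `q`-integer `[n]_q = 1 + q + ⋯ + q^{n-1}` as a polynomial in `ℤ[q]`. -/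
noncomputable def qInt (n : ℕ) : Polynomial ℤ :=
  ∑ k ∈ Finset.range n, X ^ k

/-- The image of a polynomial `f ∈ ℤ[q]` in `ℤ_p[[T]]` under the substitution `q := 1 + T`. -/
noncomputable def toPS (p : ℕ) [Fact p.Prime] (f : Polynomial ℤ) :
    PowerSeries (PadicInt p) :=
  Polynomial.aeval (1 + PowerSeries.X) f

/-!
Write `p * n = p ^ s * m` with `p ∤ m`. The factorisation `[a b]_q = [a]_q · [b]_{q^a}` gives
`[p n]_q = [p^s]_q · [m]_{q^{p^s}}`, and the second factor is a unit of `ℤ_p[[T]]`: its constant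
term, the value at `q = 1`, is `m`, which is a `p`-adic unit.
-/

open Finset in
theorem geom_sum_range_mul {R : Type*} [Semiring R] (x : R) (a b : ℕ) :
    ∑ k ∈ range (a * b), x ^ k = (∑ k ∈ range a, x ^ k) * ∑ k ∈ range b, (x ^ a) ^ k := by
  induction b with
  | zero => simp
  | succ b ih =>
    rw [Nat.mul_succ, sum_range_add, ih, sum_range_succ, mul_add, ← pow_mul]
    congr 1
    rw [sum_mul]
    exact sum_congr rfl fun k _ => by rw [← pow_add, add_comm]

theorem PowerSeries.isUnit_geom_sum {R : Type*} [Ring R] {y : PowerSeries R}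
    (hy : constantCoeff y = 1) {m : ℕ} (hm : IsUnit (m : R)) :
    IsUnit (∑ k ∈ Finset.range m, y ^ k) := by
  rw [isUnit_iff_constantCoeff, RingHom.map_geom_sum, hy, one_geom_sum]
  exact hm

theorem PadicInt.isUnit_natCast_of_not_dvd {p : ℕ} [Fact p.Prime] {m : ℕ} (hm : ¬p ∣ m) :
    IsUnit (m : ℤ_[p]) := by
  rw [isUnit_iff, norm_natCast_eq_one_iff]
  exact (Nat.Prime.coprime_iff_not_dvd Fact.out).mpr hm

theorem toPS_qInt (p : ℕ) [Fact p.Prime] (n : ℕ) :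
    toPS p (qInt n) = ∑ k ∈ Finset.range n, (1 + PowerSeries.X) ^ k := by
  simp [toPS, qInt]

/-- for a prime `p`, `n ≥ 1`, and `s := v_p(n) + 1`, in `ℤ_p[[T]]`
(with `q := 1 + T`) the ideal generated by `[pn]_q` equals the ideal generated by `[p^s]_q`. -/
theorem span_toPS_qInt_p_mul (p : ℕ) [Fact p.Prime] (n : ℕ) (hn : 1 ≤ n) :
    Ideal.span {toPS p (qInt (p * n))} =
      Ideal.span {toPS p (qInt (p ^ (padicValNat p n + 1)))} := by
  have hp : p.Prime := Fact.out
  set m := Nat.divMaxPow n p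
  have hpn : p * n = p ^ (padicValNat p n + 1) * m := by
    rw [pow_succ', mul_assoc, Nat.pow_padicValNat_mul_divMaxPow]
  have hm : ¬p ∣ m := Nat.not_dvd_divMaxPow hp.one_lt (by omega)
  rw [hpn, toPS_qInt, toPS_qInt, geom_sum_range_mul]
  refine Ideal.span_singleton_mul_right_unit (PowerSeries.isUnit_geom_sum ?_ ?_) _
  · simp
  · exact PadicInt.isUnit_natCast_of_not_dvd hm
end

section
/- Let p be a prime and n ≥ 1 an integer. In the power series ring ℤ_p[[T]], with q := 1 + T, the ideal generated by the q-factorial [n]_q! equals the ideal generated by ∏_{k=1}^{n} [p^{v_p(k)}]_q. (This is the q-analogue of Legendre's formula for the p-adic valuation of a factorial, the instance (a) of the floor-function phenomenon highlighted in the paper.) -/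
open Polynomial

/-- The `q`-factorial `[n]_q! = ∏_{k=1}^n [k]_q`. -/
noncomputable def qFact (n : ℕ) : Polynomial ℤ :=
  ∏ k ∈ Finset.Icc 1 n, qInt k

/-! Writing `k = p ^ e * m` with `p ∤ m`, one has `[k]_q = [p ^ e]_q · [m]_{q ^ (p ^ e)}`. At
`T = 0`, i.e. `q = 1`, the second factor takes the value `m`, a unit of `ℤ_p`, so it is a unit of
`ℤ_p[[T]]`. Hence `[k]_q` and `[p ^ v_p(k)]_q` are associated, and so are the two products. -/

lemma qInt_add (m n : ℕ) : qInt (m + n) = qInt m + X ^ m * qInt n := by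
  simp only [qInt, Finset.sum_range_add, Finset.mul_sum, ← pow_add]

lemma qInt_mul (a b : ℕ) : qInt (a * b) = qInt a * (qInt b).comp (X ^ a) := by
  induction b with
  | zero => simp [qInt]
  | succ b ih =>
    rw [Nat.mul_succ, qInt_add, ih, qInt_add b 1, add_comp, mul_add, mul_comp, X_pow_comp,
      ← pow_mul]
    simp [qInt, mul_comm]

lemma eval_one_qInt_comp_X_pow (a m : ℕ) : ((qInt m).comp (X ^ a)).eval 1 = m := by
  simp [qInt, eval_finsetSum]

lemma constantCoeff_aeval_one_add_X {R : Type*} [CommRing R] (f : ℤ[X]) :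
    PowerSeries.constantCoeff (aeval (1 + PowerSeries.X : PowerSeries R) f) = (f.eval 1 : ℤ) := by
  induction f using Polynomial.induction_on <;> simp_all

lemma isUnit_toPS_of_not_dvd_eval_one (p : ℕ) [hp : Fact p.Prime] {f : ℤ[X]}
    (hf : ¬ (p : ℤ) ∣ f.eval 1) : IsUnit (toPS p f) := by
  rw [toPS, PowerSeries.isUnit_iff_constantCoeff, constantCoeff_aeval_one_add_X,
    PadicInt.isUnit_iff, PadicInt.norm_intCast_eq_one_iff, isCoprime_comm,
    (Nat.prime_iff_prime_int.mp hp.out).coprime_iff_not_dvd]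
  exact hf

lemma associated_toPS_qInt_pow_padicValNat (p : ℕ) [hp : Fact p.Prime] {k : ℕ} (hk : k ≠ 0) :
    Associated (toPS p (qInt k)) (toPS p (qInt (p ^ padicValNat p k))) := by
  obtain ⟨e, m, hm, rfl⟩ := Nat.exists_eq_pow_mul_and_not_dvd hk p hp.out.ne_one
  have hm0 : m ≠ 0 := by rintro rfl; exact hm (dvd_zero p)
  rw [padicValNat_base_pow_mul hp.out.one_lt hm0, padicValNat.eq_zero_of_not_dvd hm, zero_add,
    qInt_mul, toPS, map_mul]
  refine associated_mul_unit_left _ _ (isUnit_toPS_of_not_dvd_eval_one p ?_)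
  rwa [eval_one_qInt_comp_X_pow, Int.natCast_dvd_natCast]

theorem span_toPS_qFact_eq_q_legendre_general (p : ℕ) [Fact p.Prime] (n : ℕ) :
    Ideal.span {toPS p (qFact n)} =
      Ideal.span {toPS p (∏ k ∈ Finset.Icc 1 n, qInt (p ^ padicValNat p k))} := by
  rw [Ideal.span_singleton_eq_span_singleton, qFact, toPS, toPS, map_prod, map_prod]
  exact Associated.prod _ _ _ fun k hk ↦
    associated_toPS_qInt_pow_padicValNat p (Nat.one_le_iff_ne_zero.mp (Finset.mem_Icc.mp hk).1)

/-- `q`-Legendre: for a prime `p` and `n ≥ 1`, in `ℤ_p[[T]]` (with `q := 1 + T`)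
the ideal generated by `[n]_q!` equals the ideal generated by `∏_{k=1}^{n} [p^{v_p(k)}]_q`. -/
theorem span_toPS_qFact_eq_q_legendre (p : ℕ) [Fact p.Prime] (n : ℕ) (hn : 1 ≤ n) :
    Ideal.span {toPS p (qFact n)} =
      Ideal.span {toPS p (∏ k ∈ Finset.Icc 1 n, qInt (p ^ padicValNat p k))} :=
  span_toPS_qFact_eq_q_legendre_general p n
end
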